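/- arXiv:1201.1312 — 2 statements merged into one kernel-verified Lean document; each statement's English description precedes it below -/
import Mathlib

section
/- Let E and F be finite-dimensional real inner product spaces with dim E ≥ 2 and dim F < dim E - 1, and let α : E → E → F be a symmetric bilinear map. Assume that for all orthonormal pairs u, w in E one has ⟨α(u,u), α(w,w)⟩ ≤ ‖α(u,w)‖². Then there exists a unit vector v in E with α(v, v) = 0. -/
open scoped RealInnerProductSpace

set_option maxHeartbeats 1600000

/-- If `dim E ≥ 2`, `dim F < dim E - 1`, `α` is symmetric bilinear and for all
orthonormal pairs `u, w` one has `⟨α u u, α w w⟩ ≤ ‖α u w‖²`, then there exists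
a unit vector `v` with `α v v = 0`. -/
theorem exists_asymptotic_unit_vector
    {E F : Type*} [NormedAddCommGroup E] [InnerProductSpace ℝ E]
    [NormedAddCommGroup F] [InnerProductSpace ℝ F]
    [FiniteDimensional ℝ E] [FiniteDimensional ℝ F]
    (hE : 2 ≤ Module.finrank ℝ E)
    (hdim : Module.finrank ℝ F < Module.finrank ℝ E - 1)
    (α : E →ₗ[ℝ] E →ₗ[ℝ] F)
    (hsymm : ∀ x y : E, α x y = α y x)
    (hgauss : ∀ u w : E, ‖u‖ = 1 → ‖w‖ = 1 → ⟪u, w⟫ = 0 →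
      ⟪α u u, α w w⟫ ≤ ‖α u w‖ ^ 2) :
    ∃ v : E, ‖v‖ = 1 ∧ α v v = 0 := by
  classical
  haveI : Nontrivial E := Module.nontrivial_of_finrank_pos (by omega : 0 < Module.finrank ℝ E)
  -- continuity of v ↦ ‖α v v‖
  set A : E →L[ℝ] E →L[ℝ] F :=
    LinearMap.toContinuousLinearMap
      ((LinearMap.toContinuousLinearMap :
          (E →ₗ[ℝ] F) ≃ₗ[ℝ] (E →L[ℝ] F)).toLinearMap.comp α) with hAdef
  have hA : ∀ x y : E, A x y = α x y := fun x y => rfl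
  have hcont : Continuous fun v : E => ‖α v v‖ := by
    have h1 : Continuous fun v : E => A v v :=
      isBoundedBilinearMap_apply.continuous.comp (A.continuous.prodMk continuous_id)
    have h2 : (fun v : E => ‖α v v‖) = fun v : E => ‖A v v‖ := by
      funext v; rw [hA]
    rw [h2]; exact h1.norm
  -- minimize on the sphere
  obtain ⟨v0, hv0⟩ := exists_norm_eq E (by norm_num : (0:ℝ) ≤ 1)
  have hsne : (Metric.sphere (0:E) 1).Nonempty := ⟨v0, by simp [hv0]⟩
  obtain ⟨v, hvmem, hmin⟩ :=
    (isCompact_sphere (0:E) 1).exists_isMinOn hsne hcont.continuousOn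
  have hv1 : ‖v‖ = 1 := by simpa using hvmem
  refine ⟨v, hv1, ?_⟩
  by_contra hz
  set z : F := α v v with hzdef
  have hzne : z ≠ 0 := hz
  have hvne : v ≠ 0 := by
    intro h; rw [h] at hv1; simp at hv1
  -- find a unit vector w orthogonal to v with α v w = 0
  set K : Submodule ℝ E := (ℝ ∙ v)ᗮ with hKdef
  have hrank : Module.finrank ℝ F < Module.finrank ℝ K := by
    have h1 : Module.finrank ℝ (ℝ ∙ v) + Module.finrank ℝ K = Module.finrank ℝ E :=
      Submodule.finrank_add_finrank_orthogonal _
    rw [finrank_span_singleton hvne] at h1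
    omega
  set T : K →ₗ[ℝ] F := (α v).comp K.subtype with hTdef
  have hTninj : ¬ Function.Injective T := by
    intro hinj
    exact absurd (LinearMap.finrank_le_finrank_of_injective hinj) (not_le.2 hrank)
  rw [← LinearMap.ker_eq_bot] at hTninj
  obtain ⟨w0, hw0mem, hw0ne⟩ := Submodule.exists_mem_ne_zero_of_ne_bot hTninj
  have hw0E : (w0 : E) ≠ 0 := fun h => hw0ne (Subtype.ext h)
  have hαvw0 : α v (w0 : E) = 0 := hw0mem
  have hvw0 : ⟪v, (w0 : E)⟫ = 0 :=
    Submodule.mem_orthogonal_singleton_iff_inner_right.mp w0.2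
  set w : E := ‖(w0 : E)‖⁻¹ • (w0 : E) with hwdef
  have hw1 : ‖w‖ = 1 := by
    rw [hwdef, norm_smul, norm_inv, norm_norm,
      inv_mul_cancel₀ (norm_ne_zero_iff.mpr hw0E)]
  have hvw : ⟪v, w⟫ = 0 := by
    rw [hwdef, real_inner_smul_right, hvw0, mul_zero]
  have hαvw : α v w = 0 := by
    rw [hwdef, map_smul, hαvw0, smul_zero]
  set b : F := α w w with hbdef
  clear_value z b
  -- Gauss inequality gives ⟪z, b⟫ ≤ 0
  have hgzb : ⟪z, b⟫ ≤ 0 := by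
    have h := hgauss v w hv1 hw1 hvw
    rw [hαvw] at h
    rw [hzdef, hbdef]
    simpa using h
  -- minimality gives ‖z‖² ≤ ‖(1-s)•z + s•b‖² for s ∈ [0,1]
  have key : ∀ s : ℝ, 0 ≤ s → s ≤ 1 → ‖z‖ ≤ ‖(1 - s) • z + s • b‖ := by
    intro s hs0 hs1
    set c : ℝ := Real.sqrt (1 - s) with hcdef
    set d : ℝ := Real.sqrt s with hddef
    have hc2 : c * c = 1 - s := Real.mul_self_sqrt (by linarith)
    have hd2 : d * d = s := Real.mul_self_sqrt hs0
    set u : E := c • v + d • w with hudef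
    have hu1 : ‖u‖ = 1 := by
      have hsq : ‖u‖ ^ 2 = 1 := by
        rw [hudef, norm_add_sq_real, norm_smul, norm_smul, real_inner_smul_left,
          real_inner_smul_right, hvw]
        have : (‖c‖ * ‖v‖) ^ 2 + 2 * (c * (d * 0)) + (‖d‖ * ‖w‖) ^ 2
            = c ^ 2 + d ^ 2 := by
          rw [hv1, hw1]
          rw [mul_pow, mul_pow, Real.norm_eq_abs, Real.norm_eq_abs, sq_abs, sq_abs]
          ring
        rw [this, sq, sq, hc2, hd2]; ring
      rw [← Real.sqrt_one, ← hsq, Real.sqrt_sq (norm_nonneg u)]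
    have huu : α u u = (1 - s) • z + s • b := by
      rw [hudef]
      simp only [map_add, map_smul, LinearMap.add_apply, LinearMap.smul_apply]
      rw [hαvw, hsymm w v, hαvw]
      simp only [smul_zero, add_zero, zero_add, smul_add]
      rw [smul_smul, smul_smul, hc2, hd2, hzdef, hbdef]
    have h3 := isMinOn_iff.mp hmin u (by simp [hu1])
    rw [huu] at h3
    rw [← hzdef] at h3
    exact h3
  -- deduce ⟪z, b - z⟫ ≥ 0
  have hsq : ∀ s : ℝ, 0 ≤ s → s ≤ 1 →
      0 ≤ 2 * ⟪z, b - z⟫ * s + s ^ 2 * ‖b - z‖ ^ 2 := by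
    intro s hs0 hs1
    have h := key s hs0 hs1
    have h2 : ‖z‖ ^ 2 ≤ ‖(1 - s) • z + s • b‖ ^ 2 :=
      pow_le_pow_left₀ (norm_nonneg z) h 2
    have heq : (1 - s) • z + s • b = z + s • (b - z) := by
      rw [smul_sub]; module
    rw [heq, norm_add_sq_real, real_inner_smul_right, norm_smul,
      Real.norm_eq_abs] at h2
    have habs : |s| = s := abs_of_nonneg hs0
    rw [habs] at h2
    nlinarith
  have hzbz : 0 ≤ ⟪z, b - z⟫ := by
    by_contra hneg
    push_neg at hneg
    set cᵢ : ℝ := ⟪z, b - z⟫ with hci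
    set D : ℝ := ‖b - z‖ ^ 2 with hD
    have hsq' : ∀ s : ℝ, 0 ≤ s → s ≤ 1 → 0 ≤ 2 * cᵢ * s + s ^ 2 * D := hsq
    clear_value cᵢ D
    have hD0 : 0 ≤ D := by rw [hD]; positivity
    rcases eq_or_lt_of_le hD0 with hD0' | hDpos
    · have := hsq' 1 (by norm_num) (le_refl 1)
      rw [← hD0'] at this
      nlinarith
    · set s : ℝ := min 1 (-cᵢ / D) with hs
      have hspos : 0 < s := lt_min one_pos (div_pos (by linarith) hDpos)
      have hs1 : s ≤ 1 := min_le_left _ _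
      have hsD : s ≤ -cᵢ / D := min_le_right _ _
      have := hsq' s (le_of_lt hspos) hs1
      have hsd : s * D ≤ -cᵢ := by
        rw [div_eq_mul_inv] at hsD
        calc s * D ≤ (-cᵢ * D⁻¹) * D := by nlinarith
        _ = -cᵢ := by field_simp
      nlinarith
  -- contradiction: ⟪z,b⟫ ≥ ‖z‖² > 0 but ⟪z,b⟫ ≤ 0
  have hzz : ⟪z, z⟫ = ‖z‖ ^ 2 := real_inner_self_eq_norm_sq z
  rw [inner_sub_right, hzz] at hzbz
  have hzpos : 0 < ‖z‖ ^ 2 := by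
    have := norm_pos_iff.mpr hzne
    positivity
  linarith
end

section
/- Let E and F be finite-dimensional real inner product spaces with dim F < dim E - 1, and let α : E → E → F be a symmetric bilinear map such that for all orthonormal u, w in E, ⟨α(u,u), α(w,w)⟩ ≤ ‖α(u,w)‖². Then there exist orthonormal vectors u, v in E with α(u, u) = 0 and α(u, v) = 0. -/
/-!
Let `u` minimise `‖α x x‖` on the unit sphere. For a unit vector `v ⟂ u`, comparing `u` with the
normalisation of `u + t v` and letting `t → 0` gives the second-variation inequality
`‖α u u‖² ≤ 2 ‖α u v‖² + ⟪α u u, α v v⟫`, so with the Gauss inequality `‖α u u‖² ≤ 3 ‖α u v‖²`.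
Since `dim u^⟂ = dim E - 1 > dim F`, the linear map `α u` vanishes on some unit `v ⟂ u`, and then
also `α u u = 0`.
-/

open scoped RealInnerProductSpace
open Filter Topology

theorem nonneg_of_forall_ne_zero_nonneg_add_mul_sq {b d : ℝ}
    (h : ∀ t : ℝ, t ≠ 0 → 0 ≤ b + d * t ^ 2) : 0 ≤ b := by
  have hlim : Tendsto (fun t : ℝ => b + d * t ^ 2) (𝓝[≠] 0) (𝓝 b) :=
    ((continuous_const.add (continuous_const.mul (continuous_pow 2))).tendsto' 0 b
      (by simp)).mono_left nhdsWithin_le_nhds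
  exact ge_of_tendsto hlim (eventually_nhdsWithin_of_forall h)

theorem norm_sq_le_of_forall_mul_norm_le_norm {F : Type*} [NormedAddCommGroup F]
    [InnerProductSpace ℝ F] {A B C : F}
    (h : ∀ t : ℝ, (1 + t ^ 2) * ‖A‖ ≤ ‖A + (2 * t) • B + t ^ 2 • C‖) :
    ‖A‖ ^ 2 ≤ 2 * ‖B‖ ^ 2 + ⟪A, C⟫ := by
  have hsq (t : ℝ) : ((1 + t ^ 2) * ‖A‖) ^ 2 ≤ ‖A + t ^ 2 • C + (2 * t) • B‖ ^ 2 := by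
    rw [add_right_comm]
    exact pow_le_pow_left₀ (by positivity) (h t) 2
  have hsq' (t : ℝ) : ((1 + t ^ 2) * ‖A‖) ^ 2 ≤ ‖A + t ^ 2 • C - (2 * t) • B‖ ^ 2 := by
    simpa [neg_smul, ← sub_eq_add_neg] using hsq (-t)
  suffices ∀ t : ℝ, t ≠ 0 →
      0 ≤ (2 * ‖B‖ ^ 2 + ⟪A, C⟫ - ‖A‖ ^ 2) + (‖C‖ ^ 2 - ‖A‖ ^ 2) / 2 * t ^ 2 by
    linarith [nonneg_of_forall_ne_zero_nonneg_add_mul_sq this]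
  intro t ht
  -- adding the inequalities at `t` and `-t` cancels the terms of odd degree in `t`
  have hpar := parallelogram_law_with_norm ℝ (A + t ^ 2 • C) ((2 * t) • B)
  have hAC : ‖A + t ^ 2 • C‖ ^ 2 = ‖A‖ ^ 2 + 2 * t ^ 2 * ⟪A, C⟫ + t ^ 4 * ‖C‖ ^ 2 := by
    rw [norm_add_sq_real, inner_smul_right, norm_smul, Real.norm_eq_abs,
      abs_of_nonneg (by positivity)]
    ring
  have hB : ‖(2 * t) • B‖ ^ 2 = 4 * t ^ 2 * ‖B‖ ^ 2 := by
    rw [norm_smul, Real.norm_eq_abs, mul_pow, sq_abs]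
    ring
  have hsum : 0 ≤ 4 * t ^ 2 *
      ((2 * ‖B‖ ^ 2 + ⟪A, C⟫ - ‖A‖ ^ 2) + (‖C‖ ^ 2 - ‖A‖ ^ 2) / 2 * t ^ 2) := by
    linarith [hsq t, hsq' t]
  exact (mul_nonneg_iff_of_pos_left (by positivity)).mp hsum

theorem exists_norm_eq_one_forall_mul_norm_sq_le {E F : Type*} [NormedAddCommGroup E]
    [NormedSpace ℝ E] [FiniteDimensional ℝ E] [Nontrivial E] [NormedAddCommGroup F]
    [NormedSpace ℝ F] (α : E →ₗ[ℝ] E →ₗ[ℝ] F) :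
    ∃ u : E, ‖u‖ = 1 ∧ ∀ x, ‖α u u‖ * ‖x‖ ^ 2 ≤ ‖α x x‖ := by
  have hcont : Continuous fun x : E => ‖α x x‖ := by
    simpa using (α.toContinuousBilinearMap.continuous₂.comp
      (continuous_id.prodMk continuous_id)).norm
  obtain ⟨u, hu, hmin⟩ := (isCompact_sphere (0 : E) 1).exists_isMinOn
    (NormedSpace.sphere_nonempty.mpr zero_le_one) hcont.continuousOn
  refine ⟨u, by simpa using hu, fun x => ?_⟩
  rcases eq_or_ne x 0 with rfl | hx
  · simp
  have hy := isMinOn_iff.mp hmin (‖x‖⁻¹ • x) (by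
    rw [mem_sphere_zero_iff_norm]
    exact norm_smul_inv_norm hx)
  have hscale : α (‖x‖⁻¹ • x) (‖x‖⁻¹ • x) = (‖x‖ ^ 2)⁻¹ • α x x := by
    simp only [map_smul, LinearMap.smul_apply, smul_smul]
    ring_nf
  simp only [hscale, norm_smul, norm_inv, norm_pow, norm_norm] at hy
  rwa [le_inv_mul_iff₀ (by positivity), mul_comm] at hy

theorem norm_apply_self_sq_le_of_forall_mul_norm_sq_le {E F : Type*} [NormedAddCommGroup E]
    [InnerProductSpace ℝ E] [NormedAddCommGroup F] [InnerProductSpace ℝ F]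
    (α : E →ₗ[ℝ] E →ₗ[ℝ] F) (hsymm : ∀ x y : E, α x y = α y x) {u v : E}
    (hu : ‖u‖ = 1) (hv : ‖v‖ = 1) (huv : ⟪u, v⟫ = 0)
    (hmin : ∀ x, ‖α u u‖ * ‖x‖ ^ 2 ≤ ‖α x x‖) :
    ‖α u u‖ ^ 2 ≤ 2 * ‖α u v‖ ^ 2 + ⟪α u u, α v v⟫ := by
  refine norm_sq_le_of_forall_mul_norm_le_norm fun t => ?_
  have hnorm : ‖u + t • v‖ ^ 2 = 1 + t ^ 2 := by
    rw [norm_add_sq_real, inner_smul_right, huv, norm_smul, hu, hv, mul_one, Real.norm_eq_abs,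
      sq_abs]
    ring
  have hexp : α (u + t • v) (u + t • v) = α u u + (2 * t) • α u v + t ^ 2 • α v v := by
    simp only [map_add, map_smul, LinearMap.add_apply, LinearMap.smul_apply, hsymm v u]
    module
  have hx := hmin (u + t • v)
  rwa [hnorm, hexp, mul_comm] at hx

theorem exists_norm_eq_one_inner_eq_zero_map_eq_zero {E F : Type*} [NormedAddCommGroup E]
    [InnerProductSpace ℝ E] [FiniteDimensional ℝ E] [AddCommGroup F] [Module ℝ F]
    [FiniteDimensional ℝ F] (u : E) (L : E →ₗ[ℝ] F)
    (hdim : Module.finrank ℝ F < Module.finrank ℝ E - 1) :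
    ∃ v : E, ‖v‖ = 1 ∧ ⟪u, v⟫ = 0 ∧ L v = 0 := by
  have hK : Module.finrank ℝ E - 1 ≤ Module.finrank ℝ (ℝ ∙ u)ᗮ := by
    have := Submodule.finrank_add_finrank_orthogonal (ℝ ∙ u)
    have := finrank_span_le_card (R := ℝ) ({u} : Set E)
    simp only [Set.toFinset_singleton, Finset.card_singleton] at this
    omega
  obtain ⟨⟨v, hvK⟩, hv, hv0⟩ := Submodule.ne_bot_iff _ |>.mp
    (LinearMap.ker_ne_bot_of_finrank_lt (f := L.comp (ℝ ∙ u)ᗮ.subtype) (by omega))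
  have hv0 : v ≠ 0 := by simpa using hv0
  refine ⟨‖v‖⁻¹ • v, norm_smul_inv_norm hv0, ?_, ?_⟩
  · rw [inner_smul_right, Submodule.mem_orthogonal_singleton_iff_inner_right.mp hvK, mul_zero]
  · simpa using Or.inr hv

/-- Combining the two steps of Wilking's argument: under the dimension assumption
and the Gauss-equation inequality for orthonormal pairs, there exist orthonormal
vectors `u, v` with `α u u = 0` and `α u v = 0`. -/
theorem exists_orthonormal_pair_asymptotic
    {E F : Type*} [NormedAddCommGroup E] [InnerProductSpace ℝ E]
    [NormedAddCommGroup F] [InnerProductSpace ℝ F]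
    [FiniteDimensional ℝ E] [FiniteDimensional ℝ F]
    (hdim : Module.finrank ℝ F < Module.finrank ℝ E - 1)
    (α : E →ₗ[ℝ] E →ₗ[ℝ] F)
    (hsymm : ∀ x y : E, α x y = α y x)
    (hgauss : ∀ u w : E, ‖u‖ = 1 → ‖w‖ = 1 → ⟪u, w⟫ = 0 →
      ⟪α u u, α w w⟫ ≤ ‖α u w‖ ^ 2) :
    ∃ u v : E, ‖u‖ = 1 ∧ ‖v‖ = 1 ∧ ⟪u, v⟫ = 0 ∧ α u u = 0 ∧ α u v = 0 := by
  have : Nontrivial E := Module.nontrivial_of_finrank_pos (R := ℝ) (by omega)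
  obtain ⟨u, hu, hmin⟩ := exists_norm_eq_one_forall_mul_norm_sq_le α
  obtain ⟨v, hv, huv, hαuv⟩ := exists_norm_eq_one_inner_eq_zero_map_eq_zero u (α u) hdim
  refine ⟨u, v, hu, hv, huv, ?_, hαuv⟩
  have hvar := norm_apply_self_sq_le_of_forall_mul_norm_sq_le α hsymm hu hv huv hmin
  have hgauss_uv := hgauss u v hu hv huv
  rw [hαuv, norm_zero] at hvar hgauss_uv
  have : ‖α u u‖ ^ 2 ≤ 0 := by linarith
  simpa using this
end
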